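/- For each integer ℓ ≥ 4, the substitution θ (with θ(a)=ab, θ(b)=a) restricts to an order preserving bijection from V_ℓ onto V_{ℓ+1}. -/

import Mathlib

noncomputable section

/-- `F i` is the Fibonacci number `F_i` of the paper (`F_0 = 1`, `F_1 = 1`, `F_2 = 2`, ...). -/
def F (i : ℕ) : ℕ := Nat.fib (i + 1)

/-- The Fibonacci sequence of words on the alphabet `{a, b}` where `a = true` and
`b = false`: `W 1 = a`, `W 2 = ab`, `W (i+2) = W (i+1) ++ W i`
(setting `W 0 = b`, consistent with the recurrence). -/
def W : ℕ → List Bool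
  | 0 => [false]
  | 1 => [true]
  | n + 2 => W (n + 1) ++ W n

/-- `twoSwap l` is the word `l` with its last two letters swapped (`w̃` of the paper). -/
def twoSwap (l : List Bool) : List Bool :=
  l.dropLast.dropLast ++ (l.drop (l.length - 2)).reverse

/-- `x` belongs to the set `F̄ = {0,1,2,3,5,8,...}` of all Fibonacci numbers (including `0`). -/
def IsFib (x : ℕ) : Prop := ∃ i : ℕ, Nat.fib i = x

open scoped Classical in
/-- The map `ῑ : ℕ → ℕ`: `ῑ(x) = x` if `x ∈ F̄`, and `ῑ(x) = x - 2 F_{i-2}`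
if `F_i < x < F_{i+1}` for the (unique) integer `i ≥ 3`. -/
noncomputable def iotaBar (x : ℕ) : ℕ :=
  if IsFib x then x
  else x - 2 * F (sInf {i : ℕ | x < F (i + 1)} - 2)

/-- `ᾱ(x)` is the eventual constant value of the iterates of `ῑ` at `x`. -/
noncomputable def alphaBar (x : ℕ) : ℕ := iotaBar^[x] x

/-- `pref n` is the prefix of length `n` of the infinite Fibonacci word `w_∞`. -/
def pref (n : ℕ) : List Bool := (W (n + 2)).take n

/-- `v` is a (finite) prefix of the infinite Fibonacci word `w_∞`. -/
def FibPrefix (v : List Bool) : Prop := ∃ i : ℕ, v <+: W i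

/-- The map `ι` on prefixes of `w_∞`: `ι(v)` is the prefix of `w_∞` of length `ῑ(|v|)`. -/
noncomputable def iotaW (v : List Bool) : List Bool := pref (iotaBar v.length)

/-- The map `α` on prefixes of `w_∞`: `α(v)` is the prefix of `w_∞` of length `ᾱ(|v|)`,
an element of `{ε, w_1, w_2, ...}`. -/
noncomputable def alphaW (v : List Bool) : List Bool := pref (alphaBar v.length)

/-- `V_ℓ` is the set of prefixes `v` of `w_∞` with `α(v) ≥ w_ℓ` in the prefix order. -/
def V (ℓ : ℕ) : Set (List Bool) := {v : List Bool | FibPrefix v ∧ W ℓ <+: alphaW v}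

/-- The substitution `θ` with `θ(a) = ab` and `θ(b) = a` (as a monoid morphism on words). -/
def theta (l : List Bool) : List Bool :=
  l.flatMap fun c => if c then [true, false] else [true]

/-! ### Basic facts about `F` -/

lemma F_add_two (n : ℕ) : F (n + 2) = F (n + 1) + F n := by
  simp [F, Nat.fib_add_two]; omega

lemma F_pos (n : ℕ) : 0 < F n := Nat.fib_pos.mpr (Nat.succ_pos n)

lemma F_mono : Monotone F := fun a b h => Nat.fib_mono (by omega)

lemma two_le_F {n : ℕ} (h : 2 ≤ n) : 2 ≤ F n := F_mono h

lemma three_le_F {n : ℕ} (h : 3 ≤ n) : 3 ≤ F n := F_mono h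

lemma F_lt_F {j k : ℕ} (hj : 1 ≤ j) (hjk : j < k) : F j < F k := by
  have h1 : F j < F (j + 1) := by
    have := Nat.fib_lt_fib_succ (n := j + 1) (by omega)
    simpa [F] using this
  exact lt_of_lt_of_le h1 (F_mono (by omega))

lemma lt_F_add_two (n : ℕ) : n < F (n + 2) := by
  induction n with
  | zero => simp [F]
  | succ k ih =>
      show k + 1 < F (k + 3)
      have h1 : F (k + 3) = F (k + 2) + F (k + 1) := F_add_two (k + 1)
      have h2 := F_pos (k + 1)
      omega

/-! ### Basic facts about `W` and `pref` -/

lemma W_length (i : ℕ) : (W i).length = F i := by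
  induction i using Nat.strong_induction_on with
  | _ i ih =>
    match i with
    | 0 => rfl
    | 1 => rfl
    | (n+2) =>
      rw [W, List.length_append, ih (n+1) (by omega), ih n (by omega), F_add_two]

lemma W_prefix_succ {i : ℕ} (hi : 1 ≤ i) : W i <+: W (i + 1) := by
  match i, hi with
  | (n+1), _ => rw [show n + 1 + 1 = n + 2 from rfl, W]; exact List.prefix_append _ _

lemma W_prefix_mono {i j : ℕ} (hi : 1 ≤ i) (hij : i ≤ j) : W i <+: W j := by
  induction j with
  | zero => have : i = 0 := by omega
            simp [this]
  | succ k ih =>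
      rcases Nat.lt_or_ge i (k+1) with h | h
      · exact (ih (by omega)).trans (W_prefix_succ (by omega))
      · have : i = k + 1 := by omega
        simp [this]

lemma take_eq_of_prefix {u v : List Bool} (h : u <+: v) {n : ℕ} (hn : n ≤ u.length) :
    v.take n = u.take n := by
  obtain ⟨t, rfl⟩ := h
  rw [List.take_append, show n - u.length = 0 by omega, List.take_zero,
    List.append_nil]

lemma pref_eq_take {m n : ℕ} (hm : 1 ≤ m) (hn : n ≤ F m) : pref n = (W m).take n := by
  rw [pref]
  rcases le_total m (n + 2) with h | h
  · exact take_eq_of_prefix (W_prefix_mono hm h) (by rw [W_length]; exact hn)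
  · exact (take_eq_of_prefix (W_prefix_mono (by omega) h)
      (by rw [W_length]; exact le_of_lt (lt_F_add_two n))).symm

lemma pref_length (n : ℕ) : (pref n).length = n := by
  rw [pref, List.length_take, W_length]
  exact min_eq_left (le_of_lt (lt_F_add_two n))

lemma pref_prefix_W (n : ℕ) : pref n <+: W (n + 2) := List.take_prefix _ _

lemma pref_unique {u : List Bool} {i : ℕ} (h : u <+: W i) (hi : 1 ≤ i) :
    u = pref u.length := by
  rw [pref_eq_take hi (by rw [← W_length]; exact h.length_le)]
  exact List.prefix_iff_eq_take.mp h

lemma pref_take {n m : ℕ} (h : n ≤ m) : (pref m).take n = pref n := by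
  rw [pref, List.take_take, min_eq_left h,
    ← pref_eq_take (m := m + 2) (by omega) (by have := lt_F_add_two m; omega)]

lemma pref_mono {n m : ℕ} (h : n ≤ m) : pref n <+: pref m := by
  rw [← pref_take h]; exact List.take_prefix _ _

lemma pref_F {i : ℕ} (hi : 1 ≤ i) : pref (F i) = W i := by
  rw [pref_eq_take hi le_rfl, ← W_length, List.take_length]

example : True := trivial

/-! ### `theta` and the length map `Lf` -/

lemma theta_append (u v : List Bool) : theta (u ++ v) = theta u ++ theta v :=
  List.flatMap_append

lemma theta_W : ∀ i, theta (W i) = W (i + 1)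
  | 0 => rfl
  | 1 => rfl
  | (n+2) => by
      rw [W, theta_append, theta_W (n+1), theta_W n]
      rfl

/-- The length of `θ` applied to the prefix of length `n`. -/
def Lf (n : ℕ) : ℕ := (theta (pref n)).length

lemma theta_pref (n : ℕ) : theta (pref n) = pref (Lf n) := by
  have h : theta (pref n) <+: W (n + 3) := by
    obtain ⟨t, ht⟩ := pref_prefix_W n
    rw [← theta_W (n + 2), ← ht, theta_append]
    exact List.prefix_append _ _
  exact pref_unique h (by omega)

lemma Lf_zero : Lf 0 = 0 := rfl

lemma Lf_F {i : ℕ} (hi : 1 ≤ i) : Lf (F i) = F (i + 1) := by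
  rw [Lf, pref_F hi, theta_W, W_length]

/-- `wA n` is the letter of the infinite Fibonacci word at (0-based) position `n`. -/
def wA (n : ℕ) : Bool := (pref (n + 1)).getD n false

lemma pref_succ (n : ℕ) : pref (n + 1) = pref n ++ [wA n] := by
  have hlen : n < (W (n + 3)).length := by
    rw [W_length]
    have h := show n + 1 < F (n + 3) from lt_F_add_two (n + 1); omega
  have h1 : pref (n + 1) = (W (n + 3)).take (n + 1) :=
    pref_eq_take (by omega) (by
      have h := show n + 1 < F (n + 3) from lt_F_add_two (n + 1); omega)
  have h0 : pref n = (W (n + 3)).take n :=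
    pref_eq_take (by omega) (by
      have h := show n + 1 < F (n + 3) from lt_F_add_two (n + 1); omega)
  have hts : (W (n + 3)).take (n + 1) = (W (n + 3)).take n ++ [(W (n + 3))[n]] := by
    rw [List.take_succ, List.getElem?_eq_getElem hlen]; rfl
  have hwa : wA n = (W (n + 3))[n] := by
    rw [wA, h1, hts, ← h0]
    rw [List.getD_eq_getElem _ _ (by simp [pref_length])]
    have : n = (pref n).length := (pref_length n).symm
    simp [List.getElem_append_right, pref_length]
  rw [h1, hts, ← h0, hwa]

lemma theta_single (c : Bool) : theta [c] = if c then [true, false] else [true] := by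
  cases c <;> rfl

lemma Lf_succ (n : ℕ) : Lf (n + 1) = Lf n + (if wA n then 2 else 1) := by
  rw [Lf, pref_succ, theta_append, List.length_append, theta_single]
  cases wA n <;> simp [Lf]

lemma Lf_strictMono : StrictMono Lf := by
  apply strictMono_nat_of_lt_succ
  intro n
  rw [Lf_succ]
  cases wA n <;> simp

lemma Lf_mono : Monotone Lf := Lf_strictMono.monotone

lemma Lf_pos {n : ℕ} (h : 1 ≤ n) : 1 ≤ Lf n := by
  have := Lf_strictMono (show 0 < n from h)
  rw [Lf_zero] at this; omega

/-! ### The key commutation of `W j` with prefixes -/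

lemma take_comm : ∀ j, 1 ≤ j →
    (W (j+1) ++ W j).take (F (j+2) - 2) = (W j ++ W (j+1)).take (F (j+2) - 2) := by
  intro j hj
  induction j with
  | zero => omega
  | succ n ih =>
      rcases Nat.eq_or_lt_of_le hj with h1 | h1
      · simp only [← h1]
        decide
      · have hn : 1 ≤ n := by omega
        have e1 : W (n + 2) ++ W (n + 1) = W (n + 1) ++ (W n ++ W (n + 1)) := by
          rw [W]; simp [List.append_assoc]
        have e2 : W (n + 1) ++ W (n + 2) = W (n + 1) ++ (W (n + 1) ++ W n) := by
          rw [W]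
        have hF : F (n + 3) - 2 = (W (n + 1)).length + (F (n + 2) - 2) := by
          have e : F (n + 3) = F (n + 2) + F (n + 1) := F_add_two (n + 1)
          have h2 := two_le_F (show 2 ≤ n + 2 by omega)
          rw [W_length]
          omega
        rw [e1, e2, hF, List.take_length_add_append, List.take_length_add_append, ih hn]

/-- Key decomposition: `pref (F j + s) = W j ++ pref s` for `s ≤ F (j+1) - 2`. -/
lemma pref_add {j s : ℕ} (hj : 1 ≤ j) (hs : s + 2 ≤ F (j + 1)) :
    pref (F j + s) = W j ++ pref s := by
  have hFj2 : F (j + 2) = F (j + 1) + F j := F_add_two j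
  have h1 : pref (F j + s) = (W (j + 2)).take (F j + s) :=
    pref_eq_take (by omega) (by omega)
  have h2 : W (j + 2) = W (j + 1) ++ W j := by rw [W]
  have h3 : (W (j + 1) ++ W j).take (F j + s)
      = ((W (j + 1) ++ W j).take (F (j + 2) - 2)).take (F j + s) := by
    rw [List.take_take, min_eq_left (by omega)]
  have h4 : ((W j ++ W (j + 1)).take (F (j + 2) - 2)).take (F j + s)
      = (W j ++ W (j + 1)).take (F j + s) := by
    rw [List.take_take, min_eq_left (by omega)]
  have h5 : (W j ++ W (j + 1)).take (F j + s) = W j ++ (W (j + 1)).take s := by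
    have : F j + s = (W j).length + s := by rw [W_length]
    rw [this, List.take_length_add_append]
  rw [h1, h2, h3, take_comm j hj, h4, h5, ← pref_eq_take (by omega) (by omega)]

lemma Lf_add {j s : ℕ} (hj : 1 ≤ j) (hs : s + 2 ≤ F (j + 1)) :
    Lf (F j + s) = F (j + 1) + Lf s := by
  rw [Lf, pref_add hj hs, theta_append, List.length_append, theta_W, W_length, Lf]

lemma wA_shift {k v : ℕ} (hk : 1 ≤ k) (hv : v + 3 ≤ F (k + 1)) :
    wA (F k + v) = wA v := by
  have h1 : pref (F k + v + 1) = W k ++ pref (v + 1) := by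
    rw [show F k + v + 1 = F k + (v + 1) from rfl]
    exact pref_add hk (by omega)
  rw [wA, h1]
  have hlen : (W k).length ≤ F k + v := by rw [W_length]; omega
  rw [List.getD_append_right _ _ _ _ hlen, W_length,
    show F k + v - F k = v by omega, wA]

example : True := trivial

/-! ### `IsFib`, `iotaBar`, `alphaBar` machinery -/

lemma isFib_F (i : ℕ) : IsFib (F i) := ⟨i + 1, rfl⟩

lemma notFib_between {j x : ℕ} (h1 : F j < x) (h2 : x < F (j + 1)) : ¬ IsFib x := by
  rintro ⟨i, rfl⟩
  have e1 : F j = Nat.fib (j + 1) := rfl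
  have e2 : F (j + 1) = Nat.fib (j + 2) := rfl
  have hij : j + 2 ≤ i := by
    by_contra h
    push_neg at h
    have := Nat.fib_mono (show i ≤ j + 1 by omega)
    omega
  have := Nat.fib_mono hij
  omega

lemma iotaBar_eval {j x : ℕ} (h1 : F j < x) (h2 : x < F (j + 1)) :
    iotaBar x = x - 2 * F (j - 2) := by
  have hnf : ¬ IsFib x := notFib_between h1 h2
  have hinf : sInf {i : ℕ | x < F (i + 1)} = j := by
    apply le_antisymm
    · exact Nat.sInf_le (show j ∈ {i : ℕ | x < F (i + 1)} from h2)
    · by_contra h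
      push_neg at h
      have hmem : sInf {i : ℕ | x < F (i + 1)} ∈ {i : ℕ | x < F (i + 1)} :=
        Nat.sInf_mem ⟨x + 1, show x < F (x + 1 + 1) from lt_F_add_two x⟩
      have hmem' : x < F (sInf {i : ℕ | x < F (i + 1)} + 1) := hmem
      have hle : F (sInf {i : ℕ | x < F (i + 1)} + 1) ≤ F j := F_mono (by omega)
      omega
  rw [iotaBar, if_neg hnf, hinf]

lemma bracket_exists {x : ℕ} (hnf : ¬ IsFib x) :
    ∃ j, 3 ≤ j ∧ F j < x ∧ x < F (j + 1) := by
  have hx4 : 4 ≤ x := by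
    by_contra h
    interval_cases x
    · exact hnf ⟨0, rfl⟩
    · exact hnf ⟨1, rfl⟩
    · exact hnf ⟨3, rfl⟩
    · exact hnf ⟨4, rfl⟩
  have hmem : sInf {i : ℕ | x < F (i + 1)} ∈ {i : ℕ | x < F (i + 1)} :=
    Nat.sInf_mem ⟨x + 1, show x < F (x + 1 + 1) from lt_F_add_two x⟩
  have hmem' : x < F (sInf {i : ℕ | x < F (i + 1)} + 1) := hmem
  set j := sInf {i : ℕ | x < F (i + 1)} with hj
  have hlow : F j ≤ x := by
    rcases Nat.eq_zero_or_pos j with h0 | h0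
    · rw [h0]; have e : F 0 = 1 := rfl; omega
    · by_contra h
      push_neg at h
      have hin : j - 1 ∈ {i : ℕ | x < F (i + 1)} := by
        show x < F (j - 1 + 1)
        rwa [show j - 1 + 1 = j by omega]
      have := Nat.sInf_le hin
      omega
  have hstrict : F j < x := by
    rcases Nat.eq_or_lt_of_le hlow with h | h
    · exact absurd (h ▸ isFib_F j) hnf
    · exact h
  refine ⟨j, ?_, hstrict, hmem'⟩
  by_contra h
  push_neg at h
  have hle : F (j + 1) ≤ F 3 := F_mono (by omega)
  have e3 : F 3 = 3 := by decide
  omega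

lemma iotaBar_fib {x : ℕ} (h : IsFib x) : iotaBar x = x := by rw [iotaBar, if_pos h]

lemma iotaBar_lt {x : ℕ} (hnf : ¬ IsFib x) : iotaBar x < x := by
  obtain ⟨j, hj3, h1, h2⟩ := bracket_exists hnf
  rw [iotaBar_eval h1 h2]
  have := F_pos (j - 2)
  have := F_pos j
  omega

lemma iter_fib {y : ℕ} (h : IsFib y) : ∀ n, iotaBar^[n] y = y := by
  intro n
  induction n with
  | zero => rfl
  | succ k ih => rw [Function.iterate_succ_apply', ih, iotaBar_fib h]

lemma isFib_iter : ∀ n x, x ≤ n → IsFib (iotaBar^[n] x) := by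
  intro n
  induction n with
  | zero => intro x hx; have : x = 0 := by omega
            subst this; exact ⟨0, rfl⟩
  | succ k ih =>
      intro x hx
      by_cases h : IsFib x
      · rw [iter_fib h]; exact h
      · rw [Function.iterate_succ_apply]
        exact ih _ (by have := iotaBar_lt h; omega)

lemma isFib_alphaBar (x : ℕ) : IsFib (alphaBar x) := isFib_iter x x le_rfl

lemma alphaBar_fib {x : ℕ} (h : IsFib x) : alphaBar x = x := iter_fib h x

lemma alphaBar_iota {x : ℕ} (hnf : ¬ IsFib x) : alphaBar x = alphaBar (iotaBar x) := by
  have hx1 : 1 ≤ x := by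
    rcases Nat.eq_zero_or_pos x with h | h
    · exact absurd ⟨0, h.symm⟩ hnf
    · exact h
  have hy : iotaBar x ≤ x - 1 := by have := iotaBar_lt hnf; omega
  have h1 : alphaBar x = iotaBar^[x - 1] (iotaBar x) := by
    rw [alphaBar, show x = (x - 1) + 1 by omega, Function.iterate_succ_apply]
    rw [show x - 1 + 1 - 1 = x - 1 by omega]
  rw [h1, alphaBar]
  -- both iterates stabilize
  have hfib : IsFib (iotaBar^[iotaBar x] (iotaBar x)) := isFib_iter _ _ le_rfl
  rw [show x - 1 = iotaBar x + (x - 1 - iotaBar x) by omega, Nat.add_comm,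
    Function.iterate_add_apply, iter_fib hfib]

example : True := trivial

/-! ### Numeric evaluations of `alphaBar` -/

lemma alpha_step {j x : ℕ} (h1 : F j < x) (h2 : x < F (j + 1)) :
    alphaBar x = alphaBar (x - 2 * F (j - 2)) := by
  rw [alphaBar_iota (notFib_between h1 h2), iotaBar_eval h1 h2]

lemma alpha_step' {i j x y : ℕ} (hi : j - 2 = i) (h1 : F j < x) (h2 : x < F (j + 1))
    (h3 : x - 2 * F i = y) : alphaBar x = alphaBar y := by
  rw [alpha_step h1 h2, hi, h3]

lemma alpha_step2 {i j k x y : ℕ} (hi : j - 2 = i) (hk : j + 1 = k) (h1 : F j < x)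
    (h2 : x < F k) (h3 : x - 2 * F i = y) : alphaBar x = alphaBar y := by
  subst hk; exact alpha_step' hi h1 h2 h3

lemma alphaBar_0 : alphaBar 0 = 0 := alphaBar_fib ⟨0, by decide⟩
lemma alphaBar_1 : alphaBar 1 = 1 := alphaBar_fib ⟨1, by decide⟩
lemma alphaBar_2 : alphaBar 2 = 2 := alphaBar_fib ⟨3, by decide⟩
lemma alphaBar_3 : alphaBar 3 = 3 := alphaBar_fib ⟨4, by decide⟩
lemma alphaBar_5 : alphaBar 5 = 5 := alphaBar_fib ⟨5, by decide⟩
lemma alphaBar_4 : alphaBar 4 = 2 :=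
  (alpha_step' (i := 1) (j := 3) rfl (by decide) (by decide) (by decide)).trans alphaBar_2
lemma alphaBar_6 : alphaBar 6 = 2 :=
  (alpha_step' (i := 2) (j := 4) rfl (by decide) (by decide) (by decide)).trans alphaBar_2
lemma alphaBar_7 : alphaBar 7 = 3 :=
  (alpha_step' (i := 2) (j := 4) rfl (by decide) (by decide) (by decide)).trans alphaBar_3
lemma alphaBar_9 : alphaBar 9 = 3 :=
  (alpha_step' (i := 3) (j := 5) rfl (by decide) (by decide) (by decide)).trans alphaBar_3
lemma alphaBar_10 : alphaBar 10 = 2 :=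
  (alpha_step' (i := 3) (j := 5) rfl (by decide) (by decide) (by decide)).trans alphaBar_4
lemma alphaBar_11 : alphaBar 11 = 5 :=
  (alpha_step' (i := 3) (j := 5) rfl (by decide) (by decide) (by decide)).trans alphaBar_5
lemma alphaBar_12 : alphaBar 12 = 2 :=
  (alpha_step' (i := 3) (j := 5) rfl (by decide) (by decide) (by decide)).trans alphaBar_6

lemma alpha_table : ∀ n, n ≤ 12 → n ≠ 8 → alphaBar n ≤ 5 := by
  intro n h h8
  interval_cases n
  · rw [alphaBar_0]; omega
  · rw [alphaBar_1]; omega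
  · rw [alphaBar_2]; omega
  · rw [alphaBar_3]; omega
  · rw [alphaBar_4]; omega
  · rw [alphaBar_5]
  · rw [alphaBar_6]; omega
  · rw [alphaBar_7]; omega
  · exact absurd rfl h8
  · rw [alphaBar_9]; omega
  · rw [alphaBar_10]; omega
  · rw [alphaBar_11]
  · rw [alphaBar_12]; omega

/-! ### The two families `F k - 1` and `F k - 2` -/

lemma alphaF1 : ∀ k, alphaBar (F k - 1) ≤ 3 := by
  intro k
  induction k using Nat.strong_induction_on with
  | _ k ih =>
    rcases Nat.lt_or_ge k 6 with hk | hk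
    · interval_cases k
      · rw [show F 0 - 1 = 0 by decide, alphaBar_0]; omega
      · rw [show F 1 - 1 = 0 by decide, alphaBar_0]; omega
      · rw [show F 2 - 1 = 1 by decide, alphaBar_1]; omega
      · rw [show F 3 - 1 = 2 by decide, alphaBar_2]; omega
      · rw [show F 4 - 1 = 4 by decide, alphaBar_4]; omega
      · rw [show F 5 - 1 = 7 by decide, alphaBar_7]
    · obtain ⟨m, rfl⟩ := Nat.exists_eq_add_of_le hk
      rw [Nat.add_comm 6 m]
      have eA : F (m + 6) = F (m + 5) + F (m + 4) := F_add_two (m + 4)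
      have eB : F (m + 5) = F (m + 4) + F (m + 3) := F_add_two (m + 3)
      have eC : F (m + 4) = F (m + 3) + F (m + 2) := F_add_two (m + 2)
      have eD : F (m + 3) = F (m + 2) + F (m + 1) := F_add_two (m + 1)
      have eE : F (m + 2) = F (m + 1) + F m := F_add_two m
      have p0 := F_pos m
      have p1 := F_pos (m + 1)
      have step1 : alphaBar (F (m + 6) - 1)
          = alphaBar (F (m + 6) - 1 - 2 * F (m + 3)) :=
        alpha_step2 (i := m + 3) (j := m + 5) (k := m + 6) (by omega) (by omega)
          (by omega) (by omega) rfl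
      have step2 : alphaBar (F (m + 6) - 1 - 2 * F (m + 3)) = alphaBar (F (m + 3) - 1) :=
        alpha_step2 (i := m + 2) (j := m + 4) (k := m + 5) (by omega) (by omega)
          (by omega) (by omega) (by omega)
      rw [step1, step2]
      exact ih (m + 3) (by omega)

lemma alphaF2 : ∀ k, alphaBar (F k - 2) ≤ 5 := by
  intro k
  induction k using Nat.strong_induction_on with
  | _ k ih =>
    rcases Nat.lt_or_ge k 7 with hk | hk
    · interval_cases k
      · rw [show F 0 - 2 = 0 by decide, alphaBar_0]; omega
      · rw [show F 1 - 2 = 0 by decide, alphaBar_0]; omega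
      · rw [show F 2 - 2 = 0 by decide, alphaBar_0]; omega
      · rw [show F 3 - 2 = 1 by decide, alphaBar_1]; omega
      · rw [show F 4 - 2 = 3 by decide, alphaBar_3]; omega
      · rw [show F 5 - 2 = 6 by decide, alphaBar_6]; omega
      · rw [show F 6 - 2 = 11 by decide, alphaBar_11]
    · obtain ⟨m, rfl⟩ := Nat.exists_eq_add_of_le hk
      rw [Nat.add_comm 7 m]
      have eA : F (m + 7) = F (m + 6) + F (m + 5) := F_add_two (m + 5)
      have eB : F (m + 6) = F (m + 5) + F (m + 4) := F_add_two (m + 4)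
      have eC : F (m + 5) = F (m + 4) + F (m + 3) := F_add_two (m + 3)
      have eD : F (m + 4) = F (m + 3) + F (m + 2) := F_add_two (m + 2)
      have eE : F (m + 3) = F (m + 2) + F (m + 1) := F_add_two (m + 1)
      have p0 := F_pos (m + 1)
      have p3 := three_le_F (show 3 ≤ m + 3 by omega)
      have step1 : alphaBar (F (m + 7) - 2)
          = alphaBar (F (m + 7) - 2 - 2 * F (m + 4)) :=
        alpha_step2 (i := m + 4) (j := m + 6) (k := m + 7) (by omega) (by omega)
          (by omega) (by omega) rfl
      have step2 : alphaBar (F (m + 7) - 2 - 2 * F (m + 4)) = alphaBar (F (m + 4) - 2) :=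
        alpha_step2 (i := m + 3) (j := m + 5) (k := m + 6) (by omega) (by omega)
          (by omega) (by omega) (by omega)
      rw [step1, step2]
      exact ih (m + 4) (by omega)

example : True := trivial

/-! ### Letters of the word vs `alphaBar` -/

lemma wA_zero : wA 0 = true := by decide

lemma wA_F {k : ℕ} (hk : 2 ≤ k) : wA (F k) = true := by
  have h := wA_shift (k := k) (v := 0) (by omega)
    (by have := three_le_F (show 3 ≤ k + 1 by omega); omega)
  simpa [wA_zero] using h

lemma bLetter_alpha : ∀ n, wA n = false → alphaBar n ≤ 5 := by
  intro n
  induction n using Nat.strong_induction_on with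
  | _ n ih =>
    intro hw
    rcases Nat.lt_or_ge n 14 with hn | hn
    · rcases eq_or_ne n 8 with h8 | h8
      · rw [h8, show (8:ℕ) = F 5 by decide, wA_F (by omega)] at hw
        cases hw
      · rcases eq_or_ne n 13 with h13 | h13
        · rw [h13, show (13:ℕ) = F 6 by decide, wA_F (by omega)] at hw
          cases hw
        · exact alpha_table n (by omega) h8
    · by_cases hf : IsFib n
      · obtain ⟨i, rfl⟩ := hf
        have hfib6 : Nat.fib 6 = 8 := by decide
        have hi : 7 ≤ i := by
          by_contra h
          push_neg at h
          have := Nat.fib_mono (show i ≤ 6 by omega)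
          omega
        have hF : Nat.fib i = F (i - 1) := by rw [F]; congr 1; omega
        rw [hF, wA_F (by omega)] at hw
        cases hw
      · obtain ⟨j, hj3, h1, h2⟩ := bracket_exists hf
        have hj6 : 6 ≤ j := by
          by_contra h
          push_neg at h
          have hle : F (j + 1) ≤ F 6 := F_mono (by omega)
          have e : F 6 = 13 := by decide
          omega
        obtain ⟨m, rfl⟩ := Nat.exists_eq_add_of_le hj6
        rw [Nat.add_comm 6 m] at h1 h2
        have h2' : n < F (m + 7) := h2
        obtain ⟨t, rfl⟩ : ∃ t, n = F (m + 6) + t := ⟨n - F (m + 6), by omega⟩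
        have eA : F (m + 7) = F (m + 6) + F (m + 5) := F_add_two (m + 5)
        have eB : F (m + 6) = F (m + 5) + F (m + 4) := F_add_two (m + 4)
        have eC : F (m + 5) = F (m + 4) + F (m + 3) := F_add_two (m + 3)
        have eD : F (m + 4) = F (m + 3) + F (m + 2) := F_add_two (m + 2)
        have eE : F (m + 3) = F (m + 2) + F (m + 1) := F_add_two (m + 1)
        have p0 := F_pos (m + 1)
        have p2 := two_le_F (show 2 ≤ m + 2 by omega)
        have htpos : 0 < t := by omega
        have htlt : t < F (m + 5) := by omega
        have hwt : wA t = false := by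
          have hsh : wA (F (m + 6) + t) = wA t := wA_shift (by omega)
            (by have e : F (m + 6 + 1) = F (m + 7) := rfl; omega)
          rw [hsh] at hw
          exact hw
        by_cases hc1 : t + 1 = F (m + 4)
        · have step : alphaBar (F (m + 6) + t) = alphaBar (F (m + 5) - 1) :=
            alpha_step2 (i := m + 4) (j := m + 6) (k := m + 7) (by omega) rfl h1 h2'
              (by omega)
          rw [step]
          have := alphaF1 (m + 5)
          omega
        · by_cases hc2 : t + 2 = F (m + 4)
          · have step : alphaBar (F (m + 6) + t) = alphaBar (F (m + 5) - 2) :=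
              alpha_step2 (i := m + 4) (j := m + 6) (k := m + 7) (by omega) rfl h1 h2'
                (by omega)
            rw [step]
            exact alphaF2 (m + 5)
          · by_cases hc3 : t + 3 ≤ F (m + 4)
            · have step : alphaBar (F (m + 6) + t) = alphaBar (F (m + 3) + t) :=
                alpha_step2 (i := m + 4) (j := m + 6) (k := m + 7) (by omega) rfl h1 h2'
                  (by omega)
              have hw2 : wA (F (m + 3) + t) = wA t := wA_shift (by omega)
                (by have e : F (m + 3 + 1) = F (m + 4) := rfl; omega)
              rw [step]
              exact ih (F (m + 3) + t) (by omega) (by rw [hw2]; exact hwt)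
            · have hge : F (m + 4) ≤ t := by omega
              obtain ⟨s, rfl⟩ : ∃ s, t = F (m + 4) + s := ⟨t - F (m + 4), by omega⟩
              have hs : s < F (m + 3) := by omega
              have step : alphaBar (F (m + 6) + (F (m + 4) + s))
                  = alphaBar (F (m + 5) + s) :=
                alpha_step2 (i := m + 4) (j := m + 6) (k := m + 7) (by omega) rfl h1 h2'
                  (by omega)
              have hw2 : wA (F (m + 4) + s) = wA s := wA_shift (by omega)
                (by have e : F (m + 4 + 1) = F (m + 5) := rfl; omega)
              have hw3 : wA (F (m + 5) + s) = wA s := wA_shift (by omega)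
                (by have e : F (m + 5 + 1) = F (m + 6) := rfl; omega)
              rw [step]
              exact ih (F (m + 5) + s) (by omega) (by rw [hw3, ← hw2]; exact hwt)

example : True := trivial

/-! ### Variants with explicit index bridging -/

lemma Lf_add2 {j k s : ℕ} (hj : 1 ≤ j) (hk : j + 1 = k) (hs : s + 2 ≤ F k) :
    Lf (F j + s) = F k + Lf s := by subst hk; exact Lf_add hj hs

lemma wA_shift2 {k k' v : ℕ} (hk : 1 ≤ k) (hk' : k + 1 = k') (hv : v + 3 ≤ F k') :
    wA (F k + v) = wA v := by subst hk'; exact wA_shift hk hv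

lemma iotaBar_eval2 {i j k x : ℕ} (hi : j - 2 = i) (hk : j + 1 = k) (h1 : F j < x)
    (h2 : x < F k) : iotaBar x = x - 2 * F i := by
  subst hk; rw [iotaBar_eval h1 h2, hi]

lemma Lf_1 : Lf 1 = 2 := by decide
lemma Lf_2 : Lf 2 = 3 := by decide
lemma Lf_3 : Lf 3 = 5 := by decide
lemma Lf_4 : Lf 4 = 7 := by decide

lemma isFib_Lf {x : ℕ} (hf : IsFib x) : IsFib (Lf x) := by
  obtain ⟨i, rfl⟩ := hf
  match i with
  | 0 => exact ⟨0, rfl⟩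
  | 1 => exact ⟨3, by rw [show Nat.fib 1 = 1 from rfl, Lf_1]; decide⟩
  | (k+2) =>
      have h : Nat.fib (k + 2) = F (k + 1) := rfl
      rw [h, Lf_F (by omega)]
      exact isFib_F _

/-! ### The commutation lemma for non-bad points -/

lemma comm_lemma {x j : ℕ} (h1 : F j < x) (h2 : x < F (j + 1))
    (hbad : x + 1 ≠ F j + F (j - 2)) :
    F (j + 1) < Lf x ∧ Lf x < F (j + 2) ∧ iotaBar (Lf x) = Lf (iotaBar x) := by
  have hnfx := notFib_between h1 h2
  have hj3 : 3 ≤ j := by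
    by_contra h
    push_neg at h
    have hle : F (j + 1) ≤ F 3 := F_mono (by omega)
    have hF : 1 ≤ F j := F_pos j
    have e3 : F 3 = 3 := by decide
    have hx2 : x = 2 := by omega
    exact hnfx (hx2 ▸ ⟨3, by decide⟩)
  obtain ⟨r, rfl⟩ : ∃ r, x = F j + r := ⟨x - F j, by omega⟩
  have hr0 : 0 < r := by omega
  by_cases hA : F (j - 2) ≤ r
  · -- r ≥ F (j-2)
    obtain ⟨m, rfl⟩ : ∃ m, j = m + 3 := ⟨j - 3, by omega⟩
    have hA' : F (m + 1) ≤ r := hA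
    have h2' : F (m + 3) + r < F (m + 4) := h2
    obtain ⟨s, rfl⟩ : ∃ s, r = F (m + 1) + s := ⟨r - F (m + 1), by omega⟩
    have eA : F (m + 5) = F (m + 4) + F (m + 3) := F_add_two (m + 3)
    have eB : F (m + 4) = F (m + 3) + F (m + 2) := F_add_two (m + 2)
    have eC : F (m + 3) = F (m + 2) + F (m + 1) := F_add_two (m + 1)
    have eD : F (m + 2) = F (m + 1) + F m := F_add_two m
    have p0 := F_pos m
    have p1 := F_pos (m + 1)
    have hss : s < F m := by omega
    have hι : iotaBar (F (m + 3) + (F (m + 1) + s)) = F (m + 2) + s := by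
      rw [iotaBar_eval2 (i := m + 1) (j := m + 3) (k := m + 4) rfl rfl h1 h2']
      omega
    have hLr : Lf (F (m + 1) + s) = F (m + 2) + Lf s :=
      Lf_add2 (by omega) rfl (by omega)
    have hLx : Lf (F (m + 3) + (F (m + 1) + s)) = F (m + 4) + (F (m + 2) + Lf s) := by
      rw [Lf_add2 (j := m + 3) (k := m + 4) (by omega) rfl (by omega), hLr]
    have hLι : Lf (F (m + 2) + s) = F (m + 3) + Lf s :=
      Lf_add2 (by omega) rfl (by omega)
    have hLs_lt : Lf s < F (m + 1) := by
      rcases Nat.eq_zero_or_pos s with h0 | h0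
      · rw [h0, Lf_zero]; exact F_pos _
      · have hm1 : 1 ≤ m := by
          by_contra h
          push_neg at h
          have e0 : F 0 = 1 := by decide
          interval_cases m
          omega
        have := Lf_strictMono hss
        rwa [Lf_F hm1] at this
    have hb1 : F (m + 4) < Lf (F (m + 3) + (F (m + 1) + s)) := by
      have := Lf_pos (show 1 ≤ s + 1 by omega)
      omega
    have hb2 : Lf (F (m + 3) + (F (m + 1) + s)) < F (m + 5) := by omega
    refine ⟨hb1, hb2, ?_⟩
    rw [hι, hLι, iotaBar_eval2 (i := m + 2) (j := m + 4) (k := m + 5) rfl rfl hb1 hb2]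
    omega
  · -- r < F (j-2), and r + 1 ≠ F (j-2) by hbad, so r + 2 ≤ F (j-2)
    push_neg at hA
    have hbad' : r + 1 ≠ F (j - 2) := by
      intro h
      apply hbad
      omega
    have hr2 : r + 2 ≤ F (j - 2) := by omega
    have hj5 : 5 ≤ j := by
      by_contra h
      push_neg at h
      have : F (j - 2) ≤ F 2 := F_mono (by omega)
      have e : F 2 = 2 := by decide
      omega
    obtain ⟨m, rfl⟩ : ∃ m, j = m + 5 := ⟨j - 5, by omega⟩
    have hr2' : r + 2 ≤ F (m + 3) := hr2
    have h2' : F (m + 5) + r < F (m + 6) := h2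
    have eA : F (m + 7) = F (m + 6) + F (m + 5) := F_add_two (m + 5)
    have eB : F (m + 6) = F (m + 5) + F (m + 4) := F_add_two (m + 4)
    have eC : F (m + 5) = F (m + 4) + F (m + 3) := F_add_two (m + 3)
    have eD : F (m + 4) = F (m + 3) + F (m + 2) := F_add_two (m + 2)
    have eE : F (m + 3) = F (m + 2) + F (m + 1) := F_add_two (m + 1)
    have p0 := F_pos (m + 1)
    have p1 := F_pos (m + 2)
    have hι : iotaBar (F (m + 5) + r) = F (m + 2) + r := by
      rw [iotaBar_eval2 (i := m + 3) (j := m + 5) (k := m + 6) rfl rfl h1 h2']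
      omega
    have hLx : Lf (F (m + 5) + r) = F (m + 6) + Lf r :=
      Lf_add2 (by omega) rfl (by omega)
    have hLι : Lf (F (m + 2) + r) = F (m + 3) + Lf r :=
      Lf_add2 (by omega) rfl (by omega)
    have hLr_lt : Lf r < F (m + 4) := by
      have := Lf_strictMono (show r < F (m + 3) by omega)
      rwa [Lf_F (by omega)] at this
    have hb1 : F (m + 6) < Lf (F (m + 5) + r) := by
      have := Lf_pos (show 1 ≤ r by omega)
      omega
    have hb2 : Lf (F (m + 5) + r) < F (m + 7) := by omega
    refine ⟨hb1, hb2, ?_⟩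
    rw [hι, hLι, iotaBar_eval2 (i := m + 4) (j := m + 6) (k := m + 7) rfl rfl hb1 hb2]
    omega

/-! ### `alphaBar` commutes with `Lf` on points with large `alphaBar` -/

lemma alpha_comm : ∀ x, 5 ≤ alphaBar x → alphaBar (Lf x) = Lf (alphaBar x) := by
  intro x
  induction x using Nat.strong_induction_on with
  | _ x ih =>
    intro hx
    by_cases hf : IsFib x
    · rw [alphaBar_fib (isFib_Lf hf), alphaBar_fib hf]
    · obtain ⟨j, hj3, h1, h2⟩ := bracket_exists hf
      by_cases hbad : x + 1 = F j + F (j - 2)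
      · exfalso
        have hj4 : 4 ≤ j := by
          by_contra h
          push_neg at h
          have hj : j = 3 := by omega
          subst hj
          have e : F 1 = 1 := by decide
          have e1 : F (3 - 2) = 1 := by decide
          have e3 : F 3 = 3 := by decide
          omega
        obtain ⟨m, rfl⟩ : ∃ m, j = m + 4 := ⟨j - 4, by omega⟩
        have hbad' : x + 1 = F (m + 4) + F (m + 2) := hbad
        have eB : F (m + 4) = F (m + 3) + F (m + 2) := F_add_two (m + 2)
        have eC : F (m + 3) = F (m + 2) + F (m + 1) := F_add_two (m + 1)
        have p2 := two_le_F (show 2 ≤ m + 2 by omega)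
        have step : alphaBar x = alphaBar (F (m + 3) - 1) :=
          alpha_step2 (i := m + 2) (j := m + 4) (k := m + 5) rfl rfl h1 h2 (by omega)
        have := alphaF1 (m + 3)
        omega
      · obtain ⟨hb1, hb2, hcm⟩ := comm_lemma h1 h2 hbad
        have hnf2 : ¬IsFib (Lf x) := notFib_between hb1 hb2
        have hαι : 5 ≤ alphaBar (iotaBar x) := by
          rw [← alphaBar_iota hf]; exact hx
        rw [alphaBar_iota hnf2, hcm, ih (iotaBar x) (iotaBar_lt hf) hαι,
          ← alphaBar_iota hf]

example : True := trivial

/-! ### The family `F_i + L(F_i - 1)` is not in the range of `Lf` -/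

lemma NR : ∀ m, ∀ x, Lf x ≠ F (m + 2) + Lf (F (m + 2) - 1) := by
  intro m
  induction m using Nat.strong_induction_on with
  | _ m ih =>
    intro x hx
    rcases Nat.lt_or_ge m 2 with hm | hm
    · interval_cases m
      · have e : F 2 + Lf (F 2 - 1) = 4 := by decide
        rw [e] at hx
        rcases le_or_gt x 2 with h | h
        · have := Lf_mono h
          rw [Lf_2] at this
          omega
        · have := Lf_mono (show 3 ≤ x by omega)
          rw [Lf_3] at this
          omega
      · have e : F 3 + Lf (F 3 - 1) = 6 := by decide
        rw [e] at hx
        rcases le_or_gt x 3 with h | h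
        · have := Lf_mono h
          rw [Lf_3] at this
          omega
        · have := Lf_mono (show 4 ≤ x by omega)
          rw [Lf_4] at this
          omega
    · obtain ⟨p, rfl⟩ : ∃ p, m = p + 2 := ⟨m - 2, by omega⟩
      replace hx : Lf x = F (p + 4) + Lf (F (p + 4) - 1) := hx
      have eA : F (p + 6) = F (p + 5) + F (p + 4) := F_add_two (p + 4)
      have eB : F (p + 5) = F (p + 4) + F (p + 3) := F_add_two (p + 3)
      have eC : F (p + 4) = F (p + 3) + F (p + 2) := F_add_two (p + 2)
      have eD : F (p + 3) = F (p + 2) + F (p + 1) := F_add_two (p + 1)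
      have p2 := two_le_F (show 2 ≤ p + 2 by omega)
      have hMrec : Lf (F (p + 4) - 1) = F (p + 4) + Lf (F (p + 2) - 1) := by
        rw [show F (p + 4) - 1 = F (p + 3) + (F (p + 2) - 1) by omega]
        exact Lf_add2 (by omega) rfl (by omega)
      have hMlow : F (p + 4) ≤ Lf (F (p + 4) - 1) := by
        have h := Lf_mono (show F (p + 3) ≤ F (p + 4) - 1 by omega)
        rwa [Lf_F (by omega)] at h
      have hMhigh : Lf (F (p + 4) - 1) < F (p + 5) := by
        have h := Lf_strictMono (show F (p + 4) - 1 < F (p + 4) by omega)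
        rwa [Lf_F (by omega)] at h
      have hx1 : Lf (F (p + 4)) < Lf x := by
        rw [Lf_F (by omega)]
        have e : F (p + 4 + 1) = F (p + 5) := rfl
        omega
      have hx2 : Lf x < Lf (F (p + 5)) := by
        rw [Lf_F (by omega)]
        have e : F (p + 5 + 1) = F (p + 6) := rfl
        omega
      have hxl : F (p + 4) < x := Lf_strictMono.lt_iff_lt.mp hx1
      have hxh : x < F (p + 5) := Lf_strictMono.lt_iff_lt.mp hx2
      obtain ⟨u, rfl⟩ : ∃ u, x = F (p + 4) + u := ⟨x - F (p + 4), by omega⟩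
      have hLx : Lf (F (p + 4) + u) = F (p + 5) + Lf u :=
        Lf_add2 (by omega) rfl (by omega)
      apply ih p (by omega) u
      rw [hMrec] at hx
      rw [hLx] at hx
      omega

/-! ### Every position with letter `a` is in the range of `Lf` -/

lemma cover : ∀ y, (∃ x, Lf x = y) ∨ (∃ x, Lf x + 1 = y ∧ wA x = true) := by
  intro y
  induction y with
  | zero => exact Or.inl ⟨0, Lf_zero⟩
  | succ n ihn =>
      rcases ihn with ⟨x, hx⟩ | ⟨x, hx, hw⟩
      · by_cases hw : wA x = true
        · have hs : Lf (x + 1) = Lf x + 2 := by rw [Lf_succ, if_pos hw]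
          exact Or.inr ⟨x, by omega, hw⟩
        · have hs : Lf (x + 1) = Lf x + 1 := by rw [Lf_succ, if_neg hw]
          exact Or.inl ⟨x + 1, by omega⟩
      · have hs : Lf (x + 1) = Lf x + 2 := by rw [Lf_succ, if_pos hw]
        exact Or.inl ⟨x + 1, by omega⟩

lemma interiorLetter : ∀ x, wA x = true → wA (Lf x + 1) = false := by
  intro x
  induction x using Nat.strong_induction_on with
  | _ x ih =>
    intro hw
    by_cases hf : IsFib x
    · obtain ⟨i, rfl⟩ := hf
      rcases Nat.lt_or_ge i 3 with h | h
      · interval_cases i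
        · decide
        · exact absurd hw (by decide)
        · exact absurd hw (by decide)
      · obtain ⟨k, rfl⟩ : ∃ k, i = k + 3 := ⟨i - 3, by omega⟩
        have hxF : Nat.fib (k + 3) = F (k + 2) := rfl
        rw [hxF, Lf_F (by omega)]
        show wA (F (k + 3) + 1) = false
        rw [wA_shift2 (k := k + 3) (k' := k + 4) (by omega) rfl
          (by have h5 : F 4 ≤ F (k + 4) := F_mono (by omega)
              have e4 : F 4 = 5 := by decide
              omega)]
        decide
    · obtain ⟨j, hj3, h1, h2⟩ := bracket_exists hf
      obtain ⟨m, rfl⟩ : ∃ m, j = m + 3 := ⟨j - 3, by omega⟩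
      have h2' : x < F (m + 4) := h2
      obtain ⟨u, rfl⟩ : ∃ u, x = F (m + 3) + u := ⟨x - F (m + 3), by omega⟩
      have eA : F (m + 5) = F (m + 4) + F (m + 3) := F_add_two (m + 3)
      have eB : F (m + 4) = F (m + 3) + F (m + 2) := F_add_two (m + 2)
      have eC : F (m + 3) = F (m + 2) + F (m + 1) := F_add_two (m + 1)
      have p1 := F_pos (m + 1)
      have p2 := two_le_F (show 2 ≤ m + 2 by omega)
      have hu0 : 0 < u := by omega
      have huF : u < F (m + 2) := by omega
      have hwu : wA u = true := by
        rwa [wA_shift2 (k := m + 3) (k' := m + 4) (by omega) rfl (by omega)] at hw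
      have hLx : Lf (F (m + 3) + u) = F (m + 4) + Lf u :=
        Lf_add2 (by omega) rfl (by omega)
      have hLu_lt : Lf u < F (m + 3) := by
        have h := Lf_strictMono huF
        rwa [Lf_F (by omega)] at h
      rw [hLx, show F (m + 4) + Lf u + 1 = F (m + 4) + (Lf u + 1) by omega,
        wA_shift2 (k := m + 4) (k' := m + 5) (by omega) rfl (by omega)]
      exact ih u (by omega) hwu

lemma Rsurj {y : ℕ} (hy : wA y = true) : ∃ x, Lf x = y := by
  rcases cover y with h | ⟨x, hx, hw⟩
  · exact h
  · rw [← hx, interiorLetter x hw] at hy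
    cases hy

/-! ### Surjectivity lemma -/

lemma Nlem : ∀ y, 8 ≤ alphaBar y → ∃ x, Lf x = y ∧ 5 ≤ alphaBar x := by
  intro y
  induction y using Nat.strong_induction_on with
  | _ y ih =>
    intro hy
    by_cases hf : IsFib y
    · rw [alphaBar_fib hf] at hy
      obtain ⟨i, rfl⟩ := hf
      have hfib5 : Nat.fib 5 = 5 := by decide
      have hi : 6 ≤ i := by
        by_contra h
        push_neg at h
        have := Nat.fib_mono (show i ≤ 5 by omega)
        omega
      obtain ⟨k, rfl⟩ : ∃ k, i = k + 6 := ⟨i - 6, by omega⟩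
      have hxF : Nat.fib (k + 6) = F (k + 5) := rfl
      refine ⟨F (k + 4), ?_, ?_⟩
      · rw [Lf_F (by omega), hxF]
      · rw [alphaBar_fib (isFib_F _)]
        have h5 : F 4 = 5 := by decide
        have := F_mono (show 4 ≤ k + 4 by omega)
        omega
    · have hwy : wA y = true := by
        by_contra h
        have h' : wA y = false := by simpa using h
        have := bLetter_alpha y h'
        omega
      obtain ⟨x, rfl⟩ := Rsurj hwy
      have hxnf : ¬ IsFib x := fun h => hf (isFib_Lf h)
      obtain ⟨j, hj3, h1, h2⟩ := bracket_exists hxnf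
      have hαι : 8 ≤ alphaBar (iotaBar (Lf x)) := by
        rw [← alphaBar_iota hf]; exact hy
      by_cases hbad : x + 1 = F j + F (j - 2)
      · exfalso
        have hj4 : 4 ≤ j := by
          by_contra h
          push_neg at h
          have hj : j = 3 := by omega
          subst hj
          have e : F 1 = 1 := by decide
          have e1 : F (3 - 2) = 1 := by decide
          have e3 : F 3 = 3 := by decide
          omega
        obtain ⟨m, rfl⟩ : ∃ m, j = m + 4 := ⟨j - 4, by omega⟩
        have hbad' : x + 1 = F (m + 4) + F (m + 2) := hbad
        have eA : F (m + 6) = F (m + 5) + F (m + 4) := F_add_two (m + 4)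
        have eB : F (m + 5) = F (m + 4) + F (m + 3) := F_add_two (m + 3)
        have eC : F (m + 4) = F (m + 3) + F (m + 2) := F_add_two (m + 2)
        have eD : F (m + 3) = F (m + 2) + F (m + 1) := F_add_two (m + 1)
        have p2 := two_le_F (show 2 ≤ m + 2 by omega)
        have hxeq : x = F (m + 4) + (F (m + 2) - 1) := by omega
        have hM2pos : 1 ≤ Lf (F (m + 2) - 1) := Lf_pos (by omega)
        have hM2lt : Lf (F (m + 2) - 1) < F (m + 3) := by
          have h := Lf_strictMono (show F (m + 2) - 1 < F (m + 2) by omega)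
          rwa [Lf_F (by omega)] at h
        have hLx : Lf x = F (m + 5) + Lf (F (m + 2) - 1) := by
          rw [hxeq]
          exact Lf_add2 (by omega) rfl (by omega)
        have hι : iotaBar (Lf x) = F (m + 2) + Lf (F (m + 2) - 1) := by
          rw [iotaBar_eval2 (i := m + 3) (j := m + 5) (k := m + 6) rfl rfl
            (by omega) (by omega)]
          omega
        have hlt : iotaBar (Lf x) < Lf x := iotaBar_lt hf
        obtain ⟨x', hx', _⟩ := ih _ hlt hαι
        exact NR m x' (by rw [hx', hι])
      · obtain ⟨hb1, hb2, hcm⟩ := comm_lemma h1 h2 hbad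
        obtain ⟨x', hx', hα'⟩ := ih _ (iotaBar_lt hf) hαι
        have hx'' : x' = iotaBar x := Lf_strictMono.injective (by rw [hx', hcm])
        refine ⟨x, rfl, ?_⟩
        rw [alphaBar_iota hxnf, ← hx'']
        exact hα'

example : True := trivial

/-! ### Membership in `V ℓ` -/

lemma V_iff {ℓ : ℕ} (hl : 4 ≤ ℓ) (v : List Bool) :
    v ∈ V ℓ ↔ v = pref v.length ∧ F ℓ ≤ alphaBar v.length := by
  constructor
  · rintro ⟨⟨i, hiv⟩, hW⟩
    have hα : F ℓ ≤ alphaBar v.length := by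
      have h1 := hW.length_le
      rwa [W_length, alphaW, pref_length] at h1
    refine ⟨?_, hα⟩
    rcases Nat.eq_zero_or_pos i with h0 | h0
    · subst h0
      have hlen : v.length ≤ 1 := by
        have := hiv.length_le
        simpa [W] using this
      rcases Nat.eq_zero_or_pos v.length with hv0 | hv1
      · rw [List.length_eq_zero_iff.mp hv0]
        rfl
      · exfalso
        have hveq : v.length = 1 := by omega
        rw [hveq, alphaBar_1] at hα
        have h4 : F 4 ≤ F ℓ := F_mono hl
        have e : F 4 = 5 := by decide
        omega
    · exact pref_unique hiv h0
  · rintro ⟨h1, h2⟩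
    constructor
    · refine ⟨v.length + 2, ?_⟩
      conv_lhs => rw [h1]
      exact pref_prefix_W _
    · show W ℓ <+: alphaW v
      rw [alphaW, ← pref_F (show 1 ≤ ℓ by omega)]
      exact pref_mono h2

theorem theta_V_bijection (ℓ : ℕ) (hℓ : 4 ≤ ℓ) :
    Set.BijOn theta (V ℓ) (V (ℓ + 1)) ∧
    ∀ u ∈ V ℓ, ∀ v ∈ V ℓ, u <+: v → theta u <+: theta v := by
  have theta_of_mem : ∀ v ∈ V ℓ, theta v = pref (Lf v.length) := by
    intro v hv
    obtain ⟨h1, _⟩ := (V_iff hℓ v).mp hv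
    conv_lhs => rw [h1]
    exact theta_pref _
  constructor
  · refine ⟨?_, ?_, ?_⟩
    · -- MapsTo
      intro v hv
      obtain ⟨h1, h2⟩ := (V_iff hℓ v).mp hv
      have h5 : 5 ≤ alphaBar v.length := by
        have h4 : F 4 ≤ F ℓ := F_mono hℓ
        have e : F 4 = 5 := by decide
        omega
      have hc := alpha_comm v.length h5
      apply (V_iff (by omega) (theta v)).mpr
      have hth := theta_of_mem v hv
      constructor
      · rw [hth, pref_length]
      · rw [hth, pref_length, hc]
        calc F (ℓ + 1) = Lf (F ℓ) := (Lf_F (by omega)).symm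
          _ ≤ Lf (alphaBar v.length) := Lf_mono h2
    · -- InjOn
      intro u hu v hv he
      obtain ⟨hu1, _⟩ := (V_iff hℓ u).mp hu
      obtain ⟨hv1, _⟩ := (V_iff hℓ v).mp hv
      rw [theta_of_mem u hu, theta_of_mem v hv] at he
      have hlen : Lf u.length = Lf v.length := by
        have := congrArg List.length he
        rwa [pref_length, pref_length] at this
      have huv : u.length = v.length := Lf_strictMono.injective hlen
      rw [hu1, hv1, huv]
    · -- SurjOn
      intro v' hv'
      obtain ⟨h1, h2⟩ := (V_iff (by omega) v').mp hv'
      have h8 : 8 ≤ alphaBar v'.length := by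
        have h5 : F 5 ≤ F (ℓ + 1) := F_mono (by omega)
        have e : F 5 = 8 := by decide
        omega
      obtain ⟨x, hLx, hαx⟩ := Nlem v'.length h8
      have hc := alpha_comm x hαx
      rw [hLx] at hc
      have hxl : F ℓ ≤ alphaBar x := by
        have e : F (ℓ + 1) = Lf (F ℓ) := (Lf_F (by omega)).symm
        have h3 : Lf (F ℓ) ≤ Lf (alphaBar x) := by omega
        exact Lf_strictMono.le_iff_le.mp h3
      refine ⟨pref x, ?_, ?_⟩
      · apply (V_iff hℓ _).mpr
        refine ⟨by rw [pref_length], ?_⟩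
        rw [pref_length]
        exact hxl
      · rw [theta_pref x, hLx, ← h1]
  · intro u _ v _ huv
    obtain ⟨t, rfl⟩ := huv
    rw [theta_append]
    exact List.prefix_append _ _
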